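/- arXiv:1704.05485 — 2 statements merged into one kernel-verified Lean document; each statement's English description precedes it below -/
import Mathlib

section
/- For n ≥ 4 even, the minimum over integers k with 2 ≤ k ≤ n of max(p(k,n), p̄(k,n)) is attained at k = n/2 + 1, where p̄(k,n) = 2(n+k)/(n+k-2) and p(k,n) = 2(n-1)/(n-2) for k ≤ 3, p(k,n) = 2(2n-k+1)/(2n-k-1) for k > 3. -/
/-! Write `n = 2m`. Then `p(m+1, n) = p̄(m, n) = 6m/(3m-2)`, while `p̄(·, n)` is decreasing and
`p(·, n)` is nondecreasing in `k`. So `k ≤ m` gives `p̄(k, n) ≥ p̄(m, n)`, `k ≥ m + 1` gives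
`p(k, n) ≥ p(m + 1, n)`, and at `k = m + 1` both values are at most `6m/(3m-2)`. -/

noncomputable def pbar (k n : ℕ) : ℝ := 2 * ((n : ℝ) + k) / ((n : ℝ) + k - 2)

noncomputable def plin (k n : ℕ) : ℝ :=
  if k ≤ 3 then 2 * ((n : ℝ) - 1) / ((n : ℝ) - 2)
  else 2 * (2 * (n : ℝ) - k + 1) / (2 * (n : ℝ) - k - 1)

lemma pbar_antitone {k k' n : ℕ} (hnk : 2 < n + k) (hk : k ≤ k') : pbar k' n ≤ pbar k n := by
  have hnk' : (2 : ℝ) < n + k := by exact_mod_cast hnk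
  have hk' : (k : ℝ) ≤ k' := by exact_mod_cast hk
  rw [pbar, pbar, div_le_div_iff₀ (by linarith) (by linarith)]
  nlinarith

lemma plin_mono {k k' n : ℕ} (hn : 3 ≤ n) (hk : k ≤ k') (hk' : k' + 2 ≤ 2 * n) :
    plin k n ≤ plin k' n := by
  have hn' : (3 : ℝ) ≤ n := by exact_mod_cast hn
  have hkk' : (k : ℝ) ≤ k' := by exact_mod_cast hk
  have hk'n : (k' : ℝ) + 2 ≤ 2 * n := by exact_mod_cast hk'
  unfold plin
  split_ifs with h h' h'
  · rfl
  · have h4 : (4 : ℝ) ≤ k' := by exact_mod_cast (by omega : 4 ≤ k')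
    rw [div_le_div_iff₀ (by linarith) (by linarith)]
    nlinarith
  · omega
  · rw [div_le_div_iff₀ (by linarith) (by linarith)]
    nlinarith

lemma plin_succ_eq_pbar {m : ℕ} (hm : 2 ≤ m) : plin (m + 1) (m + m) = pbar m (m + m) := by
  have hm' : (2 : ℝ) ≤ m := by exact_mod_cast hm
  unfold plin pbar
  split_ifs with h
  · obtain rfl : m = 2 := by omega
    norm_num
  · push_cast
    rw [div_eq_div_iff (by linarith) (by linarith)]
    ring

/-- For even `n ≥ 4`, the minimum over `2 ≤ k ≤ n` of `max (p(k,n)) (p̄(k,n))`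
is attained at `k = n/2 + 1`. -/
theorem stmt1 (n : ℕ) (hn : 4 ≤ n) (heven : Even n) :
    ∀ k : ℕ, 2 ≤ k → k ≤ n →
      max (plin (n / 2 + 1) n) (pbar (n / 2 + 1) n)
        ≤ max (plin k n) (pbar k n) := by
  intro k hk2 hkn
  obtain ⟨m, rfl⟩ := heven
  have hm : 2 ≤ m := by omega
  rw [show (m + m) / 2 = m by omega]
  have hopt : max (plin (m + 1) (m + m)) (pbar (m + 1) (m + m)) ≤ pbar m (m + m) :=
    max_le (plin_succ_eq_pbar hm).le (pbar_antitone (by omega) (Nat.le_succ m))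
  refine hopt.trans ?_
  rcases le_or_gt k m with hkm | hmk
  · exact le_max_of_le_right (pbar_antitone (by omega) hkm)
  · rw [← plin_succ_eq_pbar hm]
    exact le_max_of_le_left (plin_mono (by omega) hmk (by omega))
end

section
/- Let w̄ ∈ ℝ^{n-1}, wₙ ∈ ℝ with |w̄|² + wₙ² = 1 and |wₙ² - 1/2| ≤ δ for some 0 ≤ δ < 1/4, and let ξ = (ξ̄, ξₙ) ∈ ℝⁿ with |ξ̄| = ξₙ > 0. Suppose |ξ̄·w̄ - ξₙ wₙ| ≤ ε |ξ| for some ε ≥ 0. Then |ξ̄·w̄| / (|ξ̄| |w̄|) ≥ |wₙ|/|w̄| - ε·|ξ|/(|ξ̄||w̄|) ≥ 1 - C(δ + ε) for an absolute constant C (using |ξ| = √2 |ξ̄| and |w̄| ≤ 1). -/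
open RealInnerProductSpace

/-! On the cone `‖ξ̄‖ = ξₙ` the defect `|ξ̄·w̄ - ξₙ wₙ| ≤ ε|ξ|` gives
`|ξ̄·w̄| ≥ ξₙ |wₙ| - ε|ξ|`, so after dividing by `‖ξ̄‖ ‖w̄‖` the cosine of the angle between `ξ̄`
and `w̄` is at least `|wₙ| / ‖w̄‖` up to an error `√2 ε / ‖w̄‖`. Since `(w̄, wₙ)` is a unit vector
with `wₙ² ≈ 1/2`, both `‖w̄‖` and `|wₙ|` are close to `1/√2`: the ratio is at least `1 - 2δ`
and `‖w̄‖ > 1/2`. -/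

lemma abs_div_sub_div_le_abs_div_of_abs_sub_mul_le {p a r t c : ℝ} (ht : 0 < t) (hc : 0 ≤ c)
    (h : |p - t * a| ≤ r) : |a| / c - r / (t * c) ≤ |p| / (t * c) := by
  have hp : t * |a| - r ≤ |p| := by
    have := abs_sub_abs_le_abs_sub (t * a) p
    rw [abs_sub_comm, abs_mul, abs_of_pos ht] at this
    linarith
  rw [← mul_div_mul_left |a| c ht.ne', ← sub_div]
  gcongr

lemma one_half_lt_of_sq_add_sq_eq_one {a b δ : ℝ} (hb : 0 ≤ b) (hab : b ^ 2 + a ^ 2 = 1)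
    (ha : |a ^ 2 - 1 / 2| ≤ δ) (hδ : δ < 1 / 4) : 1 / 2 < b := by
  refine (sq_lt_sq₀ (by norm_num) hb).1 ?_
  linarith [(abs_le.1 ha).2]

lemma one_sub_two_mul_le_abs_div_of_sq_add_sq_eq_one {a b δ : ℝ} (hb : 0 < b)
    (hab : b ^ 2 + a ^ 2 = 1) (ha : |a ^ 2 - 1 / 2| ≤ δ) (hδ : δ ≤ 1 / 2) :
    1 - 2 * δ ≤ |a| / b := by
  obtain ⟨ha₁, ha₂⟩ := abs_le.1 ha
  have hδ₀ : 0 ≤ δ := (abs_nonneg _).trans ha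
  -- `(1 - 2δ)² (1/2 + δ) = 1/2 - δ - 2δ²(1 - 2δ) ≤ 1/2 - δ`
  have hsq : ((1 - 2 * δ) * b) ^ 2 ≤ |a| ^ 2 := by
    rw [sq_abs]
    nlinarith [mul_nonneg (sq_nonneg δ) (sub_nonneg.2 hδ),
      mul_le_mul_of_nonneg_left (show b ^ 2 ≤ 1 / 2 + δ by linarith) (sq_nonneg (1 - 2 * δ))]
  rw [le_div_iff₀ hb]
  exact (sq_le_sq₀ (by nlinarith) (abs_nonneg a)).1 hsq

lemma sqrt_sq_add_sq_self {t : ℝ} (ht : 0 ≤ t) : √(t ^ 2 + t ^ 2) = √2 * t := by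
  rw [← two_mul, Real.sqrt_mul zero_le_two, Real.sqrt_sq ht]

/-- Core estimate in Lemma 2.4: a point `ξ = (ξ̄, ξₙ)` on the light cone whose normal is
nearly orthogonal to a near-null unit vector `(w̄, -wₙ)` has `ξ̄` nearly parallel to `w̄`. -/
theorem stmt10 :
    ∃ C : ℝ, 0 < C ∧
      ∀ (m : ℕ) (wbar : EuclideanSpace ℝ (Fin m)) (wn : ℝ)
        (ξbar : EuclideanSpace ℝ (Fin m)) (ξn δ ε : ℝ),
        ‖wbar‖ ^ 2 + wn ^ 2 = 1 →
        0 ≤ δ → δ < 1 / 4 → |wn ^ 2 - 1 / 2| ≤ δ →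
        ‖ξbar‖ = ξn → 0 < ξn →
        0 ≤ ε →
        |⟪ξbar, wbar⟫ - ξn * wn| ≤ ε * Real.sqrt (‖ξbar‖ ^ 2 + ξn ^ 2) →
        (|⟪ξbar, wbar⟫| / (‖ξbar‖ * ‖wbar‖)
            ≥ |wn| / ‖wbar‖ - ε * Real.sqrt (‖ξbar‖ ^ 2 + ξn ^ 2) / (‖ξbar‖ * ‖wbar‖)) ∧
        (|wn| / ‖wbar‖ - ε * Real.sqrt (‖ξbar‖ ^ 2 + ξn ^ 2) / (‖ξbar‖ * ‖wbar‖)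
            ≥ 1 - C * (δ + ε)) := by
  refine ⟨3, by norm_num, ?_⟩
  rintro m wbar wn ξbar ξn δ ε hw _ hδ hwn rfl hξ hε hcone
  have hwbar : 1 / 2 < ‖wbar‖ := one_half_lt_of_sq_add_sq_eq_one (norm_nonneg _) hw hwn hδ
  have hratio : 1 - 2 * δ ≤ |wn| / ‖wbar‖ :=
    one_sub_two_mul_le_abs_div_of_sq_add_sq_eq_one (by linarith) hw hwn (by linarith)
  have herror : ε * √(‖ξbar‖ ^ 2 + ‖ξbar‖ ^ 2) / (‖ξbar‖ * ‖wbar‖) ≤ 3 * ε :=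
    calc ε * √(‖ξbar‖ ^ 2 + ‖ξbar‖ ^ 2) / (‖ξbar‖ * ‖wbar‖) = ε * √2 / ‖wbar‖ := by
          rw [sqrt_sq_add_sq_self (norm_nonneg _)]
          field_simp
      _ ≤ ε * (3 / 2) / (1 / 2) := by gcongr; exact Real.sqrt_two_lt_three_halves.le
      _ = 3 * ε := by ring
  exact ⟨abs_div_sub_div_le_abs_div_of_abs_sub_mul_le hξ (norm_nonneg _) hcone,
    by linarith⟩
end
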